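/- Let P be an ergodic row-stochastic matrix on a finite set D reversible with respect to a positive probability distribution π with eigenvalues 1 = β₀ > β₁ ≥ ... ≥ β_{|D|-1} > -1 and orthonormal eigenfunctions u_k in l₂(D,π). For the Markov chain X₁,...,X_n started in the stationary distribution π, the mean squared error of S_n(f) = (1/n)∑_{i=1}^n f(X_i) as an estimator of S(f) = ∑_x f(x)π(x) equals (1/n²)∑_{k=1}^{|D|-1} a_k² W(n,β_k), where a_k = ⟨f,u_k⟩_π and W(n,β) = (n(1−β²) − 2β(1−β^n))/(1−β)². -/

import Mathlib

/-!
Write `g = f - S(f)`, so that the error is `n⁻² ∑_{i,j} E[g(X_i) g(X_j)]`. By the Markov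
property and stationarity of `π` (from detailed balance),
`E[g(X_i) g(X_j)] = ⟨g, P^{|i-j|} g⟩_π`. The orthonormal eigenfunctions have `|D|` elements,
hence form a basis, and expanding `g` in it gives `⟨g, P^d g⟩_π = ∑_k ⟨g, u_k⟩_π² β_k^d`, where
the `k = 0` term vanishes because `g` is centred and `⟨g, u_k⟩_π = a_k` otherwise. Finally
`∑_{i,j<n} β^{|i-j|} = W(n, β)` for `β ≠ 1`.
-/

open Finset Matrix

/-- `W(n,β) = (n(1−β²) − 2β(1−β^n))/(1−β)²`. -/
noncomputable def Wfun (n : ℕ) (x : ℝ) : ℝ :=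
  ((n : ℝ) * (1 - x ^ 2) - 2 * x * (1 - x ^ n)) / (1 - x) ^ 2

theorem one_sub_mul_sum_range_pow_sub {R : Type*} [CommRing R] (β : R) (n : ℕ) :
    (1 - β) * ∑ j ∈ range n, β ^ (n - j) = β * (1 - β ^ n) := by
  have hreflect : ∑ j ∈ range n, β ^ (n - j) = β * ∑ j ∈ range n, β ^ j := by
    rw [mul_sum, ← sum_range_reflect]
    refine sum_congr rfl fun j hj => ?_
    rw [← pow_succ']
    congr 1
    have := mem_range.mp hj
    omega
  rw [hreflect, mul_left_comm, mul_neg_geom_sum]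

theorem one_sub_sq_mul_sum_range_pow_dist {R : Type*} [CommRing R] (β : R) (n : ℕ) :
    (1 - β) ^ 2 * ∑ i ∈ range n, ∑ j ∈ range n, β ^ i.dist j
      = n * (1 - β ^ 2) - 2 * β * (1 - β ^ n) := by
  induction n with
  | zero => simp
  | succ n ih =>
    have hrow : ∑ j ∈ range n, β ^ n.dist j = ∑ j ∈ range n, β ^ (n - j) :=
      sum_congr rfl fun j hj => by rw [Nat.dist_eq_sub_of_le_right (mem_range.mp hj).le]
    have hcol : ∑ i ∈ range n, β ^ i.dist n = ∑ j ∈ range n, β ^ (n - j) :=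
      sum_congr rfl fun i hi => by rw [Nat.dist_eq_sub_of_le (mem_range.mp hi).le]
    simp only [sum_range_succ, sum_add_distrib, hrow, hcol, Nat.dist_self, pow_zero]
    push_cast
    linear_combination ih + 2 * (1 - β) * one_sub_mul_sum_range_pow_sub β n

theorem sum_pow_dist_eq_Wfun {β : ℝ} (hβ : β ≠ 1) (n : ℕ) :
    ∑ i : Fin n, ∑ j : Fin n, β ^ Nat.dist i j = Wfun n β := by
  have hrange : ∑ i : Fin n, ∑ j : Fin n, β ^ Nat.dist i j
      = ∑ i ∈ range n, ∑ j ∈ range n, β ^ i.dist j := by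
    rw [← Fin.sum_univ_eq_sum_range (fun i => ∑ j ∈ range n, β ^ i.dist j)]
    exact sum_congr rfl fun i _ => Fin.sum_univ_eq_sum_range (fun j => β ^ Nat.dist i j) n
  rw [hrange, Wfun, ← one_sub_sq_mul_sum_range_pow_dist,
    mul_div_cancel_left₀ _ (pow_ne_zero 2 (sub_ne_zero.mpr hβ.symm))]

section MarkovPath

variable {R D : Type*} [CommSemiring R] {P : Matrix D D R}

def pathWeight (μ : D → R) (P : Matrix D D R) {m : ℕ} (ω : Fin (m + 1) → D) : R :=
  μ (ω 0) * ∏ t : Fin m, P (ω t.castSucc) (ω t.succ)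

theorem pathWeight_cons (μ : D → R) (P : Matrix D D R) {m : ℕ} (x : D) (σ : Fin (m + 1) → D) :
    pathWeight μ P (Fin.cons x σ : Fin (m + 2) → D) = μ x * pathWeight (P x) P σ := by
  simp only [pathWeight, Fin.prod_univ_succ, Fin.cons_zero, Fin.castSucc_zero, Fin.cons_succ,
    ← Fin.succ_castSucc]

variable [Fintype D]

theorem sum_pi_fin_succ_eq_sum_cons {M : Type*} [AddCommMonoid M] {m : ℕ}
    (g : (Fin (m + 1) → D) → M) :
    ∑ ω, g ω = ∑ x, ∑ σ : Fin m → D, g (Fin.cons x σ) := by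
  rw [← (Fin.consEquiv fun _ => D).sum_comp, Fintype.sum_prod_type]
  rfl

theorem sum_pathWeight_mul_tail (μ : D → R) {m : ℕ} (G : (Fin (m + 1) → D) → R) :
    ∑ ω : Fin (m + 2) → D, pathWeight μ P ω * G (Fin.tail ω)
      = ∑ σ, pathWeight (μ ᵥ* P) P σ * G σ := by
  rw [sum_pi_fin_succ_eq_sum_cons, sum_comm]
  refine sum_congr rfl fun σ _ => ?_
  simp only [pathWeight_cons, Fin.tail_cons]
  simp only [pathWeight, vecMul, dotProduct, sum_mul, mul_assoc]

theorem sum_vecMul_of_sum_row_eq_one (hP : ∀ x, ∑ y, P x y = 1) (μ : D → R) :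
    ∑ y, (μ ᵥ* P) y = ∑ x, μ x := by
  simp only [vecMul, dotProduct]
  rw [sum_comm]
  simp only [← mul_sum, hP, mul_one]

theorem sum_pathWeight (hP : ∀ x, ∑ y, P x y = 1) (μ : D → R) {m : ℕ} :
    ∑ ω : Fin (m + 1) → D, pathWeight μ P ω = ∑ x, μ x := by
  induction m generalizing μ with
  | zero => simp [sum_pi_fin_succ_eq_sum_cons, pathWeight]
  | succ m ih =>
    simpa [ih, sum_vecMul_of_sum_row_eq_one hP] using
      sum_pathWeight_mul_tail (P := P) (m := m) μ (fun _ => (1 : R))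

theorem sum_pathWeight_mul_apply_zero (hP : ∀ x, ∑ y, P x y = 1) (μ : D → R) {m : ℕ}
    (g : D → R) : ∑ ω : Fin (m + 1) → D, pathWeight μ P ω * g (ω 0) = ∑ x, μ x * g x := by
  simp only [pathWeight, mul_right_comm _ _ (g _)]
  exact sum_pathWeight hP (fun x => μ x * g x)

variable [DecidableEq D]

theorem sum_pathWeight_mul_apply_zero_apply (hP : ∀ x, ∑ y, P x y = 1) (μ : D → R) {m : ℕ}
    (j : Fin (m + 1)) (F : D → D → R) :
    ∑ ω, pathWeight μ P ω * F (ω 0) (ω j) = ∑ x, ∑ y, μ x * (P ^ (j : ℕ)) x y * F x y := by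
  have hdiag : ∀ {m : ℕ} (μ : D → R) (F : D → D → R),
      ∑ ω : Fin (m + 1) → D, pathWeight μ P ω * F (ω 0) (ω 0)
        = ∑ x, ∑ y, μ x * (P ^ 0) x y * F x y := by
    intro m μ F
    simpa [one_apply] using sum_pathWeight_mul_apply_zero hP μ (m := m) fun x => F x x
  induction m generalizing μ F with
  | zero => obtain rfl := Fin.fin_one_eq_zero j; exact hdiag μ F
  | succ m ih =>
    rcases Fin.eq_zero_or_eq_succ j with rfl | ⟨l, rfl⟩
    · exact hdiag μ F
    rw [sum_pi_fin_succ_eq_sum_cons]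
    simp only [pathWeight_cons, Fin.cons_zero, Fin.cons_succ, mul_assoc, ← mul_sum]
    refine sum_congr rfl fun x _ => ?_
    rw [ih (P x) l (fun _ => F x), Fin.val_succ, pow_succ']
    simp only [mul_apply, sum_mul]
    rw [sum_comm]

theorem sum_pathWeight_mul_apply_apply (hP : ∀ x, ∑ y, P x y = 1) (μ : D → R) {m : ℕ}
    {i j : Fin (m + 1)} (hij : i ≤ j) (F : D → D → R) :
    ∑ ω, pathWeight μ P ω * F (ω i) (ω j)
      = ∑ x, ∑ y, (μ ᵥ* P ^ (i : ℕ)) x * (P ^ ((j : ℕ) - i)) x y * F x y := by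
  induction m generalizing μ with
  | zero =>
    obtain rfl : i = 0 := Fin.fin_one_eq_zero i
    simpa using sum_pathWeight_mul_apply_zero_apply hP μ j F
  | succ m ih =>
    rcases Fin.eq_zero_or_eq_succ i with rfl | ⟨k, rfl⟩
    · simpa using sum_pathWeight_mul_apply_zero_apply hP μ j F
    obtain ⟨l, rfl⟩ := Fin.exists_succ_eq.mpr (((Fin.succ_pos k).trans_le hij).ne')
    refine (sum_pathWeight_mul_tail μ fun σ => F (σ k) (σ l)).trans ?_
    rw [ih (μ ᵥ* P) (Fin.succ_le_succ_iff.mp hij), vecMul_vecMul, ← pow_succ', Fin.val_succ,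
      Fin.val_succ, Nat.add_sub_add_right]

theorem vecMul_pow_eq_self {μ : D → R} (hμ : μ ᵥ* P = μ) (k : ℕ) : μ ᵥ* P ^ k = μ := by
  induction k with
  | zero => simp
  | succ k ih => rw [pow_succ, ← vecMul_vecMul, ih, hμ]

theorem sum_pathWeight_mul_sum_sq (hP : ∀ x, ∑ y, P x y = 1) {μ : D → R} (hμ : μ ᵥ* P = μ)
    {m : ℕ} (g : D → R) :
    ∑ ω : Fin (m + 1) → D, pathWeight μ P ω * (∑ i, g (ω i)) ^ 2
      = ∑ i : Fin (m + 1), ∑ j : Fin (m + 1), ∑ x, ∑ y,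
          μ x * (P ^ Nat.dist i j) x y * (g x * g y) := by
  have hpair (i j : Fin (m + 1)) : ∑ ω, pathWeight μ P ω * (g (ω i) * g (ω j))
      = ∑ x, ∑ y, μ x * (P ^ Nat.dist i j) x y * (g x * g y) := by
    rcases le_total i j with hij | hji
    · rw [sum_pathWeight_mul_apply_apply hP μ hij fun x y => g x * g y, vecMul_pow_eq_self hμ,
        Nat.dist_eq_sub_of_le hij]
    · rw [sum_pathWeight_mul_apply_apply hP μ hji fun x y => g y * g x, vecMul_pow_eq_self hμ,
        Nat.dist_eq_sub_of_le_right hji]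
      simp only [mul_comm (g _) (g _)]
  simp only [sq, sum_mul_sum]
  simp only [mul_sum]
  rw [sum_comm]
  refine sum_congr rfl fun i _ => ?_
  rw [sum_comm]
  exact sum_congr rfl fun j _ => hpair i j

end MarkovPath

theorem vecMul_eq_self_of_detailed_balance {R D : Type*} [CommSemiring R] [Fintype D]
    {P : Matrix D D R} (hP : ∀ x, ∑ y, P x y = 1) {μ : D → R}
    (hrev : ∀ x y, μ x * P x y = μ y * P y x) : μ ᵥ* P = μ := by
  ext y
  simp only [vecMul, dotProduct, hrev _ y, ← mul_sum, hP, mul_one]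

theorem pow_mulVec_eq_pow_smul {R D : Type*} [CommSemiring R] [Fintype D] [DecidableEq D]
    {P : Matrix D D R} {v : D → R} {c : R} (h : P *ᵥ v = c • v) (d : ℕ) :
    P ^ d *ᵥ v = c ^ d • v := by
  induction d with
  | zero => simp
  | succ d ih => rw [pow_succ', ← mulVec_mulVec, ih, mulVec_smul, h, smul_smul, pow_succ]

section Spectral

variable {K D ι : Type*} [Field K] [Fintype D] [DecidableEq ι] {π : D → K} {u : ι → D → K}

theorem sum_sub_mul_mul_eq_ite_of_orthonormal
    (hortho : ∀ k l, ∑ x, u k x * u l x * π x = if k = l then 1 else 0) {k₀ : ι}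
    (hu : u k₀ = fun _ => 1) (f : D → K) (k : ι) :
    ∑ x, (f x - ∑ y, f y * π y) * u k x * π x
      = if k = k₀ then 0 else ∑ x, f x * u k x * π x := by
  have horth : ∑ x, u k x * π x = if k = k₀ then 1 else 0 := by
    simpa [hu, eq_comm] using hortho k₀ k
  have hsplit : ∑ x, (f x - ∑ y, f y * π y) * u k x * π x
      = ∑ x, f x * u k x * π x - (∑ y, f y * π y) * ∑ x, u k x * π x := by
    simp only [sub_mul, sum_sub_distrib, mul_sum, mul_assoc]
  rw [hsplit, horth]
  split_ifs with hk
  · simp [hk, hu]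
  · simp

variable [Fintype ι]

theorem sum_mul_mul_eq_ite_of_orthonormal [DecidableEq D]
    (hcard : Fintype.card ι = Fintype.card D)
    (hortho : ∀ k l, ∑ x, u k x * u l x * π x = if k = l then 1 else 0) (x y : D) :
    ∑ k, u k x * u k y * π x = if x = y then 1 else 0 := by
  have hAB : (of fun k x => u k x : Matrix ι D K) * of (fun x k => u k x * π x) = 1 := by
    ext k l
    simp [mul_apply, one_apply, ← hortho, mul_assoc]
  have := congrFun₂ ((mul_eq_one_comm_of_equiv (Fintype.equivOfCardEq hcard)).mp hAB) x y
  simpa [mul_apply, one_apply, mul_right_comm] using this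

theorem sum_coeff_smul_of_orthonormal (hcard : Fintype.card ι = Fintype.card D)
    (hortho : ∀ k l, ∑ x, u k x * u l x * π x = if k = l then 1 else 0) (g : D → K) :
    ∑ k, (∑ x, g x * u k x * π x) • u k = g := by
  classical
  ext y
  simp only [Finset.sum_apply, Pi.smul_apply, smul_eq_mul, sum_mul]
  rw [sum_comm]
  have hrow (x : D) : ∑ k, g x * u k x * π x * u k y = g x * ∑ k, u k x * u k y * π x := by
    rw [mul_sum]
    exact sum_congr rfl fun _ _ => by ring
  simp [hrow, sum_mul_mul_eq_ite_of_orthonormal hcard hortho]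

theorem sum_mul_pow_apply_mul_of_orthonormal [DecidableEq D] {P : Matrix D D K} {β : ι → K}
    (hcard : Fintype.card ι = Fintype.card D)
    (hortho : ∀ k l, ∑ x, u k x * u l x * π x = if k = l then 1 else 0)
    (heig : ∀ k, P *ᵥ u k = β k • u k) (g : D → K) (d : ℕ) :
    ∑ x, ∑ y, π x * (P ^ d) x y * (g x * g y) = ∑ k, (∑ x, g x * u k x * π x) ^ 2 * β k ^ d := by
  set a : ι → K := fun k => ∑ x, g x * u k x * π x
  have hg : P ^ d *ᵥ g = ∑ k, (a k * β k ^ d) • u k := by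
    conv_lhs => rw [← sum_coeff_smul_of_orthonormal hcard hortho g]
    simp only [mulVec_sum, mulVec_smul, pow_mulVec_eq_pow_smul (heig _), smul_smul]
    rfl
  calc ∑ x, ∑ y, π x * (P ^ d) x y * (g x * g y)
      = ∑ x, π x * g x * (P ^ d *ᵥ g) x := by
        refine sum_congr rfl fun x _ => ?_
        simp only [mulVec, dotProduct, mul_sum]
        exact sum_congr rfl fun y _ => by ring
    _ = ∑ k, a k * β k ^ d * ∑ x, g x * u k x * π x := by
        simp only [hg, Finset.sum_apply, Pi.smul_apply, smul_eq_mul, mul_sum]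
        rw [sum_comm]
        exact sum_congr rfl fun k _ => sum_congr rfl fun x _ => by ring
    _ = ∑ k, a k ^ 2 * β k ^ d := sum_congr rfl fun k _ => by ring

end Spectral

theorem stmt_16_general {D : Type*} [Fintype D]
    (π : D → ℝ)
    (P : Matrix D D ℝ)
    (hProw : ∀ x, ∑ y, P x y = 1)
    (hrev : ∀ x y, π x * P x y = π y * P y x)
    -- orthonormal eigen-decomposition with `u₀ ≡ 1`, `β₀ = 1`
    (u : Fin (Fintype.card D) → D → ℝ) (βs : Fin (Fintype.card D) → ℝ)
    (h_eig : ∀ k, P.mulVec (u k) = βs k • u k)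
    (h_ortho : ∀ k l, ∑ x, u k x * u l x * π x = if k = l then (1 : ℝ) else 0)
    (h_u0 : ∀ k : Fin (Fintype.card D), (k : ℕ) = 0 → u k = fun _ => 1)
    (h_erg : ∀ k : Fin (Fintype.card D), (k : ℕ) ≠ 0 → |βs k| < 1)
    (n : ℕ) (hn : 0 < n) (f : D → ℝ) :
    -- expectation over paths of length n, started in the stationary distribution π,
    -- of |S_n(f) − S(f)|²
    (∑ ω : Fin n → D,
        (π (ω ⟨0, hn⟩) *
          ∏ i : Fin (n - 1),
            P (ω (Fin.cast (Nat.succ_pred_eq_of_pos hn) i.castSucc))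
              (ω (Fin.cast (Nat.succ_pred_eq_of_pos hn) i.succ))) *
        ((1 / (n : ℝ)) * (∑ i, f (ω i)) - ∑ x, f x * π x) ^ 2)
      = (1 / (n : ℝ) ^ 2) *
          ∑ k ∈ Finset.univ.filter (fun k : Fin (Fintype.card D) => (k : ℕ) ≠ 0),
            (∑ x, f x * u k x * π x) ^ 2 * Wfun n (βs k) := by
  classical
  obtain ⟨m, rfl⟩ : ∃ m, n = m + 1 := ⟨n - 1, by omega⟩
  set S := ∑ x, f x * π x
  have hcentred_coeff (k : Fin (Fintype.card D)) : ∑ x, (f x - S) * u k x * π x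
      = if (k : ℕ) = 0 then 0 else ∑ x, f x * u k x * π x := by
    simpa [Fin.ext_iff] using
      sum_sub_mul_mul_eq_ite_of_orthonormal h_ortho (h_u0 ⟨0, k.pos⟩ rfl) f k
  have hsq (ω : Fin (m + 1) → D) : ((1 / ((m + 1 : ℕ) : ℝ)) * ∑ i, f (ω i) - S) ^ 2
      = 1 / ((m + 1 : ℕ) : ℝ) ^ 2 * (∑ i, (f (ω i) - S)) ^ 2 := by
    simp only [sum_sub_distrib, sum_const, card_univ, Fintype.card_fin, nsmul_eq_mul]
    field_simp
  change ∑ ω : Fin (m + 1) → D, pathWeight π P ω * _ = _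
  simp only [hsq, mul_left_comm _ (1 / _ : ℝ), ← mul_sum]
  rw [sum_pathWeight_mul_sum_sq hProw (vecMul_eq_self_of_detailed_balance hProw hrev)
    (fun x => f x - S)]
  simp only [sum_mul_pow_apply_mul_of_orthonormal (Fintype.card_fin _) h_ortho h_eig,
    hcentred_coeff]
  rw [sum_filter]
  refine congrArg _ ((sum_congr rfl fun i _ => sum_comm).trans (sum_comm.trans ?_))
  refine sum_congr rfl fun k _ => ?_
  simp only [← mul_sum]
  by_cases hk : (k : ℕ) = 0
  · simp [hk]
  · simp only [hk, if_false, ne_eq, not_false_eq_true, if_true,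
      sum_pow_dist_eq_Wfun (abs_lt.mp (h_erg k hk)).2.ne]

theorem stmt_16 {D : Type*} [Fintype D] [Nonempty D] [DecidableEq D]
    (π : D → ℝ) (hπpos : ∀ x, 0 < π x) (hπsum : ∑ x, π x = 1)
    (P : Matrix D D ℝ) (hPnonneg : ∀ x y, 0 ≤ P x y)
    (hProw : ∀ x, ∑ y, P x y = 1)
    (hrev : ∀ x y, π x * P x y = π y * P y x)
    -- orthonormal eigen-decomposition with `u₀ ≡ 1`, `β₀ = 1`
    (u : Fin (Fintype.card D) → D → ℝ) (βs : Fin (Fintype.card D) → ℝ)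
    (h_eig : ∀ k, P.mulVec (u k) = βs k • u k)
    (h_ortho : ∀ k l, ∑ x, u k x * u l x * π x = if k = l then (1 : ℝ) else 0)
    (h_b0 : ∀ k : Fin (Fintype.card D), (k : ℕ) = 0 → βs k = 1)
    (h_u0 : ∀ k : Fin (Fintype.card D), (k : ℕ) = 0 → u k = fun _ => 1)
    (h_erg : ∀ k : Fin (Fintype.card D), (k : ℕ) ≠ 0 → |βs k| < 1)
    (n : ℕ) (hn : 0 < n) (f : D → ℝ) :
    -- expectation over paths of length n, started in the stationary distribution π,
    -- of |S_n(f) − S(f)|²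
    (∑ ω : Fin n → D,
        (π (ω ⟨0, hn⟩) *
          ∏ i : Fin (n - 1),
            P (ω (Fin.cast (Nat.succ_pred_eq_of_pos hn) i.castSucc))
              (ω (Fin.cast (Nat.succ_pred_eq_of_pos hn) i.succ))) *
        ((1 / (n : ℝ)) * (∑ i, f (ω i)) - ∑ x, f x * π x) ^ 2)
      = (1 / (n : ℝ) ^ 2) *
          ∑ k ∈ Finset.univ.filter (fun k : Fin (Fintype.card D) => (k : ℕ) ≠ 0),
            (∑ x, f x * u k x * π x) ^ 2 * Wfun n (βs k) :=
  stmt_16_general π P hProw hrev u βs h_eig h_ortho h_u0 h_erg n hn f
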